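/- Let λ > 1 and let φ : (0,∞) → [0,∞) be a convex function satisfying φ(λt) = φ(t)/λ for all t > 0. Then there exists a constant a ≥ 0 such that φ(t) ≤ a/t for all t > 0. -/

import Mathlib

/-! Scaling makes `t ↦ t * φ t` invariant under `t ↦ lam * t`, so it is determined by its values
on the fundamental domain `[1, lam]`; there convexity bounds `φ` by the larger of `φ 1` and
`φ lam`. -/

section MulInvariant

variable {lam : ℝ} {g : ℝ → ℝ}

theorem apply_zpow_mul_of_apply_mul (hlam : 0 < lam) (hg : ∀ t > 0, g (lam * t) = g t)
    (n : ℤ) {t : ℝ} (ht : 0 < t) : g (lam ^ n * t) = g t := by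
  induction n using Int.induction_on with
  | zero => simp
  | succ n ih =>
    rw [zpow_add_one₀ hlam.ne', mul_comm _ lam, mul_assoc,
      hg _ (mul_pos (zpow_pos hlam n) ht), ih]
  | pred n ih =>
    have hprev := hg _ (mul_pos (zpow_pos hlam (-(n : ℤ) - 1)) ht)
    rw [← mul_assoc, ← zpow_one_add₀ hlam.ne', add_sub_cancel, ih] at hprev
    exact hprev.symm

theorem le_of_apply_mul_of_le_on_Icc (hlam : 1 < lam) (hg : ∀ t > 0, g (lam * t) = g t)
    {C : ℝ} (hC : ∀ s ∈ Set.Icc 1 lam, g s ≤ C) {t : ℝ} (ht : 0 < t) : g t ≤ C := by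
  have hlam₀ : 0 < lam := one_pos.trans hlam
  obtain ⟨n, hn_le, hn_lt⟩ := exists_mem_Ico_zpow ht hlam
  have hpow : 0 < lam ^ n := zpow_pos hlam₀ n
  have hs : lam ^ (-n) * t ∈ Set.Icc 1 lam := by
    rw [zpow_neg, ← div_eq_inv_mul]
    constructor
    · rwa [one_le_div hpow]
    · rw [div_le_iff₀ hpow, ← zpow_one_add₀ hlam₀.ne', add_comm]
      exact hn_lt.le
  rw [← apply_zpow_mul_of_apply_mul hlam₀ hg (-n) ht]
  exact hC _ hs

end MulInvariant

theorem stmt_0_general (lam : ℝ) (hlam : 1 < lam) (φ : ℝ → ℝ)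
    (hconv : ConvexOn ℝ (Set.Ioi (0:ℝ)) φ)
    (hscal : ∀ t > (0:ℝ), φ (lam * t) = φ t / lam) :
    ∃ a : ℝ, 0 ≤ a ∧ ∀ t > (0:ℝ), φ t ≤ a / t := by
  have hlam₀ : 0 < lam := one_pos.trans hlam
  set M := max (max (φ 1) (φ lam)) 0
  have hinvariant : ∀ t > 0, lam * t * φ (lam * t) = t * φ t := fun t ht => by
    rw [hscal t ht]
    field_simp
  have hfundamental : ∀ s ∈ Set.Icc 1 lam, s * φ s ≤ lam * M := fun s hs => by
    have hφs : φ s ≤ M := by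
      refine (hconv.le_on_segment (Set.mem_Ioi.2 one_pos) (Set.mem_Ioi.2 hlam₀) ?_).trans
        (le_max_left _ _)
      rwa [segment_eq_Icc hlam.le]
    calc s * φ s ≤ s * M := mul_le_mul_of_nonneg_left hφs (zero_le_one.trans hs.1)
      _ ≤ lam * M := mul_le_mul_of_nonneg_right hs.2 (le_max_right _ _)
  refine ⟨lam * M, mul_nonneg hlam₀.le (le_max_right _ _), fun t ht => ?_⟩
  rw [le_div_iff₀ ht, mul_comm]
  exact le_of_apply_mul_of_le_on_Icc hlam hinvariant hfundamental ht

theorem stmt_0 (lam : ℝ) (hlam : 1 < lam) (φ : ℝ → ℝ)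
    (hconv : ConvexOn ℝ (Set.Ioi (0:ℝ)) φ)
    (hnonneg : ∀ t > (0:ℝ), 0 ≤ φ t)
    (hscal : ∀ t > (0:ℝ), φ (lam * t) = φ t / lam) :
    ∃ a : ℝ, 0 ≤ a ∧ ∀ t > (0:ℝ), φ t ≤ a / t :=
  stmt_0_general lam hlam φ hconv hscal
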